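/- Observation-probability equality (appendix proof supporting Theorem 1): if prior matching holds and the parameter update criterion holds, then for every time t, every action sequence a₀,…,a_t and every observation sequence o₁,…,o_t whose observable history h_t has nonzero probability under both joints, and every observation o_{t+1}, the BPORL and GBA-POMDP predictive observation probabilities coincide: p^BRL(o_{t+1} | h_t, a_t) = p^GBA(o_{t+1} | h_t, a_t). -/

import Mathlib

open scoped ENNReal BigOperators Classical

variable {S A O 𝔇 : Type*}
  [Fintype S] [Nonempty S] [Fintype A] [Nonempty A] [Fintype O] [Nonempty O]
  [Fintype 𝔇]

/-- Joint probability `P(D, H_t)` of a dynamics model `D` together with a full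
history `H_t = (s₀,a₀,s₁,o₁,…,a_{t-1},s_t,o_t)`:
`P(D,H_t) = p_𝔇(D) · p₀(s₀) · ∏_{i=0}^{t-1} D(s_{i+1},o_{i+1} | s_i,a_i)`.
Here `s i` is `s_i`, `a i` is `a_i` and `o i` is `o_{i+1}`. -/
noncomputable def jointP (p𝔇 : PMF 𝔇) (p₀ : PMF S)
    (dyn : 𝔇 → S → A → PMF (S × O)) (t : ℕ)
    (D : 𝔇) (s : Fin (t + 1) → S) (a : Fin t → A) (o : Fin t → O) : ℝ≥0∞ :=
  p𝔇 D * p₀ (s 0) * ∏ i : Fin t, dyn D (s i.castSucc) (a i) (s i.succ, o i)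

/-- Probability of the observable history `h_t = (a₀,o₁,…,a_{t-1},o_t)`:
the joint marginalized over the dynamics model and the state sequence. -/
noncomputable def histP (p𝔇 : PMF 𝔇) (p₀ : PMF S)
    (dyn : 𝔇 → S → A → PMF (S × O)) (t : ℕ)
    (a : Fin t → A) (o : Fin t → O) : ℝ≥0∞ :=
  ∑ D : 𝔇, ∑ s : Fin (t + 1) → S, jointP p𝔇 p₀ dyn t D s a o

/-- The belief `p(D, s_t | h_t)` over the dynamics model and current state given
the observable history. -/
noncomputable def belief (p𝔇 : PMF 𝔇) (p₀ : PMF S)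
    (dyn : 𝔇 → S → A → PMF (S × O)) (t : ℕ)
    (a : Fin t → A) (o : Fin t → O) (D : 𝔇) (st : S) : ℝ≥0∞ :=
  (∑ s : Fin t → S, jointP p𝔇 p₀ dyn t D (Fin.snoc s st) a o) /
    histP p𝔇 p₀ dyn t a o

/-- The mixture weight `p(s_{0:t} | h_t)`: posterior of a state sequence given
the observable history. -/
noncomputable def seqPost (p𝔇 : PMF 𝔇) (p₀ : PMF S)
    (dyn : 𝔇 → S → A → PMF (S × O)) (t : ℕ)
    (a : Fin t → A) (o : Fin t → O) (s : Fin (t + 1) → S) : ℝ≥0∞ :=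
  (∑ D : 𝔇, jointP p𝔇 p₀ dyn t D s a o) / histP p𝔇 p₀ dyn t a o

/-- The model posterior `p(D | H_t)` given a full history. -/
noncomputable def modelPost (p𝔇 : PMF 𝔇) (p₀ : PMF S)
    (dyn : 𝔇 → S → A → PMF (S × O)) (t : ℕ)
    (s : Fin (t + 1) → S) (a : Fin t → A) (o : Fin t → O) (D : 𝔇) : ℝ≥0∞ :=
  jointP p𝔇 p₀ dyn t D s a o / ∑ D' : 𝔇, jointP p𝔇 p₀ dyn t D' s a o

/-- The one-step predictive `p(s_{t+1}, o_{t+1} | H_t, a_t)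
= ∑_D P(D,H_{t+1}) / ∑_D P(D,H_t)` where `H_{t+1} = (H_t,a_t,s_{t+1},o_{t+1})`. -/
noncomputable def predBRL (p𝔇 : PMF 𝔇) (p₀ : PMF S)
    (dyn : 𝔇 → S → A → PMF (S × O)) (t : ℕ)
    (s : Fin (t + 1) → S) (a : Fin t → A) (o : Fin t → O)
    (act : A) (s' : S) (o' : O) : ℝ≥0∞ :=
  (∑ D : 𝔇,
      jointP p𝔇 p₀ dyn (t + 1) D (Fin.snoc s s') (Fin.snoc a act) (Fin.snoc o o')) /
    ∑ D : 𝔇, jointP p𝔇 p₀ dyn t D s a o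

variable {Θ : Type*}

/-- The parameter `θ_{H_t}` associated with a full history, defined recursively by
`θ_{H_0} = θ₀` and `θ_{H_{i+1}} = U(θ_{H_i}, s_i, a_i, s_{i+1}, o_{i+1})`. -/
def paramOf (U : Θ → S → A → S → O → Θ) (θ₀ : Θ) :
    (t : ℕ) → (Fin (t + 1) → S) → (Fin t → A) → (Fin t → O) → Θ
  | 0, _, _, _ => θ₀
  | t + 1, s, a, o =>
      U (paramOf U θ₀ t (fun i => s i.castSucc) (fun i => a i.castSucc)
          (fun i => o i.castSucc))
        (s (Fin.last t).castSucc) (a (Fin.last t)) (s (Fin.last (t + 1)))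
        (o (Fin.last t))

/-- Prior matching: the initial parameter induces the same one-step dynamics as
the prior over models, `∑_D p_𝔇(D)·D(s₁,o₁|s₀,a₀) = p(s₁,o₁|θ₀,s₀,a₀)`. -/
def PriorMatching (p𝔇 : PMF 𝔇) (dyn : 𝔇 → S → A → PMF (S × O))
    (model : Θ → S → A → PMF (S × O)) (θ₀ : Θ) : Prop :=
  ∀ (s₀ : S) (a₀ : A) (s₁ : S) (o₁ : O),
    ∑ D : 𝔇, p𝔇 D * dyn D s₀ a₀ (s₁, o₁) = model θ₀ s₀ a₀ (s₁, o₁)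

/-- Parameter update criterion: if at stage `t` the Bayesian one-step predictive
matches the parameterized one for all (nonzero-probability) full histories, then
the same holds at stage `t+1`. -/
def ParamUpdateCriterion (p𝔇 : PMF 𝔇) (p₀ : PMF S)
    (dyn : 𝔇 → S → A → PMF (S × O)) (model : Θ → S → A → PMF (S × O))
    (U : Θ → S → A → S → O → Θ) (θ₀ : Θ) : Prop :=
  ∀ t : ℕ,
    (∀ (s : Fin (t + 1) → S) (a : Fin t → A) (o : Fin t → O),
        (∑ D : 𝔇, jointP p𝔇 p₀ dyn t D s a o) ≠ 0 →
        ∀ (act : A) (s' : S) (o' : O),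
          predBRL p𝔇 p₀ dyn t s a o act s' o' =
            model (paramOf U θ₀ t s a o) (s (Fin.last t)) act (s', o')) →
    (∀ (s : Fin (t + 2) → S) (a : Fin (t + 1) → A) (o : Fin (t + 1) → O),
        (∑ D : 𝔇, jointP p𝔇 p₀ dyn (t + 1) D s a o) ≠ 0 →
        ∀ (act : A) (s' : S) (o' : O),
          predBRL p𝔇 p₀ dyn (t + 1) s a o act s' o' =
            model (paramOf U θ₀ (t + 1) s a o) (s (Fin.last (t + 1))) act (s', o'))

/-- The GBA-POMDP joint probability over full histories (for given actions):
`P^GBA(H_t) = p₀(s₀) · ∏_{i=0}^{t-1} p(s_{i+1},o_{i+1} | θ_{H_i}, s_i, a_i)`. -/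
noncomputable def jointGBA (p₀ : PMF S) (model : Θ → S → A → PMF (S × O))
    (U : Θ → S → A → S → O → Θ) (θ₀ : Θ) :
    (t : ℕ) → (Fin (t + 1) → S) → (Fin t → A) → (Fin t → O) → ℝ≥0∞
  | 0, s, _, _ => p₀ (s 0)
  | t + 1, s, a, o =>
      jointGBA p₀ model U θ₀ t (fun i => s i.castSucc) (fun i => a i.castSucc)
          (fun i => o i.castSucc) *
        model
          (paramOf U θ₀ t (fun i => s i.castSucc) (fun i => a i.castSucc)
            (fun i => o i.castSucc))
          (s (Fin.last t).castSucc) (a (Fin.last t))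
          (s (Fin.last (t + 1)), o (Fin.last t))

/-- The GBA-POMDP posterior over state sequences, `p^GBA(s_{0:t} | h_t)`. -/
noncomputable def seqPostGBA (p₀ : PMF S) (model : Θ → S → A → PMF (S × O))
    (U : Θ → S → A → S → O → Θ) (θ₀ : Θ) (t : ℕ)
    (a : Fin t → A) (o : Fin t → O) (s : Fin (t + 1) → S) : ℝ≥0∞ :=
  jointGBA p₀ model U θ₀ t s a o /
    ∑ s' : Fin (t + 1) → S, jointGBA p₀ model U θ₀ t s' a o

/-- The BPORL predictive observation probability `p^BRL(o_{t+1} | h_t, a_t)`. -/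
noncomputable def obsPredBRL (p𝔇 : PMF 𝔇) (p₀ : PMF S)
    (dyn : 𝔇 → S → A → PMF (S × O)) (t : ℕ)
    (a : Fin t → A) (o : Fin t → O) (act : A) (o' : O) : ℝ≥0∞ :=
  (∑ D : 𝔇, ∑ s : Fin (t + 2) → S,
      jointP p𝔇 p₀ dyn (t + 1) D s (Fin.snoc a act) (Fin.snoc o o')) /
    histP p𝔇 p₀ dyn t a o

/-- The GBA-POMDP predictive observation probability `p^GBA(o_{t+1} | h_t, a_t)`. -/
noncomputable def obsPredGBA (p₀ : PMF S) (model : Θ → S → A → PMF (S × O))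
    (U : Θ → S → A → S → O → Θ) (θ₀ : Θ) (t : ℕ)
    (a : Fin t → A) (o : Fin t → O) (act : A) (o' : O) : ℝ≥0∞ :=
  (∑ s : Fin (t + 2) → S,
      jointGBA p₀ model U θ₀ (t + 1) s (Fin.snoc a act) (Fin.snoc o o')) /
    ∑ s : Fin (t + 1) → S, jointGBA p₀ model U θ₀ t s a o

/-! Summing the BPORL joint over the dynamics model gives the GBA-POMDP joint,
`∑_D P(D, H_t) = P^GBA(H_t)`, for every full history `H_t`. Both joints grow by one factor per
step, so it suffices that the factors agree whenever `∑_D P(D, H_t) ≠ 0`; there the BPORL factor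
is the one-step predictive `p(s_{t+1}, o_{t+1} | H_t, a_t)`, which equals
`p(s_{t+1}, o_{t+1} | θ_{H_t}, s_t, a_t)` by induction on `t`: prior matching is the base case and
the update criterion is the induction step. Both predictive observation probabilities are ratios
of marginals of these joints, hence equal. -/

theorem PMF.sum_coe_eq_one {α : Type*} [Fintype α] (p : PMF α) : ∑ a, p a = 1 := by
  rw [← tsum_fintype (L := SummationFilter.unconditional α), p.tsum_coe]

section Bayes

omit [Fintype S] [Fintype A] [Fintype O] [Nonempty S] [Nonempty A] [Nonempty O]

variable {p𝔇 : PMF 𝔇} {p₀ : PMF S} {dyn : 𝔇 → S → A → PMF (S × O)}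
  {model : Θ → S → A → PMF (S × O)} {U : Θ → S → A → S → O → Θ} {θ₀ : Θ}

omit [Fintype 𝔇] in
theorem jointP_snoc (t : ℕ) (D : 𝔇) (s : Fin (t + 1) → S) (a : Fin t → A) (o : Fin t → O)
    (act : A) (s' : S) (o' : O) :
    jointP p𝔇 p₀ dyn (t + 1) D (Fin.snoc s s') (Fin.snoc a act) (Fin.snoc o o') =
      jointP p𝔇 p₀ dyn t D s a o * dyn D (s (Fin.last t)) act (s', o') := by
  simp [jointP, Fin.prod_univ_castSucc, Fin.succ_castSucc, mul_assoc, -Fin.castSucc_succ]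

omit [Fintype 𝔇] in
theorem jointGBA_snoc (t : ℕ) (s : Fin (t + 1) → S) (a : Fin t → A) (o : Fin t → O)
    (act : A) (s' : S) (o' : O) :
    jointGBA p₀ model U θ₀ (t + 1) (Fin.snoc s s') (Fin.snoc a act) (Fin.snoc o o') =
      jointGBA p₀ model U θ₀ t s a o *
        model (paramOf U θ₀ t s a o) (s (Fin.last t)) act (s', o') := by
  simp [jointGBA]

omit [Fintype 𝔇] in
theorem jointP_ne_top (t : ℕ) (D : 𝔇) (s : Fin (t + 1) → S) (a : Fin t → A) (o : Fin t → O) :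
    jointP p𝔇 p₀ dyn t D s a o ≠ ⊤ :=
  ENNReal.mul_ne_top (ENNReal.mul_ne_top (p𝔇.apply_ne_top D) (p₀.apply_ne_top _))
    (ENNReal.prod_ne_top fun _ _ => PMF.apply_ne_top _ _)

theorem sum_jointP_zero (s : Fin 1 → S) (a : Fin 0 → A) (o : Fin 0 → O) :
    ∑ D : 𝔇, jointP p𝔇 p₀ dyn 0 D s a o = p₀ (s 0) := by
  simp [jointP, ← Finset.sum_mul, p𝔇.sum_coe_eq_one]

theorem predBRL_zero_eq_model (hprior : PriorMatching p𝔇 dyn model θ₀)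
    (s : Fin 1 → S) (a : Fin 0 → A) (o : Fin 0 → O)
    (h : ∑ D : 𝔇, jointP p𝔇 p₀ dyn 0 D s a o ≠ 0) (act : A) (s' : S) (o' : O) :
    predBRL p𝔇 p₀ dyn 0 s a o act s' o' = model θ₀ (s 0) act (s', o') := by
  rw [sum_jointP_zero] at h
  have hnum : ∑ D : 𝔇, jointP p𝔇 p₀ dyn 1 D (Fin.snoc s s') (Fin.snoc a act) (Fin.snoc o o') =
      model θ₀ (s 0) act (s', o') * p₀ (s 0) := by
    rw [← hprior, Finset.sum_mul]
    refine Finset.sum_congr rfl fun D _ => ?_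
    rw [jointP_snoc]
    simp only [jointP, Finset.univ_eq_empty, Finset.prod_empty, mul_one, Fin.last_zero]
    ring
  rw [predBRL, hnum, sum_jointP_zero, ENNReal.mul_div_cancel_right h (p₀.apply_ne_top _)]

theorem predBRL_eq_model (hprior : PriorMatching p𝔇 dyn model θ₀)
    (hcrit : ParamUpdateCriterion p𝔇 p₀ dyn model U θ₀) (t : ℕ)
    (s : Fin (t + 1) → S) (a : Fin t → A) (o : Fin t → O)
    (h : ∑ D : 𝔇, jointP p𝔇 p₀ dyn t D s a o ≠ 0) (act : A) (s' : S) (o' : O) :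
    predBRL p𝔇 p₀ dyn t s a o act s' o' =
      model (paramOf U θ₀ t s a o) (s (Fin.last t)) act (s', o') := by
  induction t generalizing act s' o' with
  | zero => exact predBRL_zero_eq_model hprior s a o h act s' o'
  | succ t ih => exact hcrit t ih s a o h act s' o'

theorem sum_jointP_snoc (hprior : PriorMatching p𝔇 dyn model θ₀)
    (hcrit : ParamUpdateCriterion p𝔇 p₀ dyn model U θ₀) (t : ℕ)
    (s : Fin (t + 1) → S) (a : Fin t → A) (o : Fin t → O) (act : A) (s' : S) (o' : O) :
    ∑ D : 𝔇, jointP p𝔇 p₀ dyn (t + 1) D (Fin.snoc s s') (Fin.snoc a act) (Fin.snoc o o') =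
      (∑ D : 𝔇, jointP p𝔇 p₀ dyn t D s a o) *
        model (paramOf U θ₀ t s a o) (s (Fin.last t)) act (s', o') := by
  by_cases h : ∑ D : 𝔇, jointP p𝔇 p₀ dyn t D s a o = 0
  · have hD : ∀ D, jointP p𝔇 p₀ dyn t D s a o = 0 := fun D =>
      Finset.sum_eq_zero_iff.mp h D (Finset.mem_univ D)
    simp [jointP_snoc, hD]
  · have hfin : ∑ D : 𝔇, jointP p𝔇 p₀ dyn t D s a o ≠ ⊤ :=
      ENNReal.sum_ne_top.2 fun D _ => jointP_ne_top t D s a o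
    rw [← predBRL_eq_model hprior hcrit t s a o h, predBRL, ENNReal.mul_div_cancel h hfin]

theorem sum_jointP_eq_jointGBA (hprior : PriorMatching p𝔇 dyn model θ₀)
    (hcrit : ParamUpdateCriterion p𝔇 p₀ dyn model U θ₀) (t : ℕ)
    (s : Fin (t + 1) → S) (a : Fin t → A) (o : Fin t → O) :
    ∑ D : 𝔇, jointP p𝔇 p₀ dyn t D s a o = jointGBA p₀ model U θ₀ t s a o := by
  induction t with
  | zero => exact sum_jointP_zero s a o
  | succ t ih =>
    induction s using Fin.snocCases
    induction a using Fin.snocCases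
    induction o using Fin.snocCases
    rw [sum_jointP_snoc hprior hcrit, jointGBA_snoc, ih]

theorem histP_eq_sum_jointGBA [Fintype S] (hprior : PriorMatching p𝔇 dyn model θ₀)
    (hcrit : ParamUpdateCriterion p𝔇 p₀ dyn model U θ₀) (t : ℕ) (a : Fin t → A)
    (o : Fin t → O) :
    histP p𝔇 p₀ dyn t a o = ∑ s : Fin (t + 1) → S, jointGBA p₀ model U θ₀ t s a o := by
  rw [histP, Finset.sum_comm]
  exact Finset.sum_congr rfl fun s _ => sum_jointP_eq_jointGBA hprior hcrit t s a o

end Bayes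

theorem observation_probability_equality_general (p𝔇 : PMF 𝔇) (p₀ : PMF S)
    (dyn : 𝔇 → S → A → PMF (S × O)) (model : Θ → S → A → PMF (S × O))
    (U : Θ → S → A → S → O → Θ) (θ₀ : Θ)
    (hprior : PriorMatching p𝔇 dyn model θ₀)
    (hcrit : ParamUpdateCriterion p𝔇 p₀ dyn model U θ₀)
    (t : ℕ) (a : Fin t → A) (act : A) (o : Fin t → O)
    (o' : O) :
    obsPredBRL p𝔇 p₀ dyn t a o act o' =
      obsPredGBA p₀ model U θ₀ t a o act o' :=
  congrArg₂ (· / ·) (histP_eq_sum_jointGBA hprior hcrit (t + 1) (Fin.snoc a act) (Fin.snoc o o'))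
    (histP_eq_sum_jointGBA hprior hcrit t a o)

/-- **Observation-probability equality (appendix, supporting Theorem 1).**
If prior matching and the parameter update criterion hold, then for every time
`t`, every action sequence `a₀,…,a_t` and observation sequence `o₁,…,o_t` whose
observable history `h_t` has nonzero probability under both joints, and every
observation `o_{t+1}`: `p^BRL(o_{t+1}|h_t,a_t) = p^GBA(o_{t+1}|h_t,a_t)`. -/
theorem observation_probability_equality (p𝔇 : PMF 𝔇) (p₀ : PMF S)
    (dyn : 𝔇 → S → A → PMF (S × O)) (model : Θ → S → A → PMF (S × O))
    (U : Θ → S → A → S → O → Θ) (θ₀ : Θ)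
    (hprior : PriorMatching p𝔇 dyn model θ₀)
    (hcrit : ParamUpdateCriterion p𝔇 p₀ dyn model U θ₀)
    (t : ℕ) (a : Fin t → A) (act : A) (o : Fin t → O)
    (hBRL : histP p𝔇 p₀ dyn t a o ≠ 0)
    (hGBA : (∑ s : Fin (t + 1) → S, jointGBA p₀ model U θ₀ t s a o) ≠ 0)
    (o' : O) :
    obsPredBRL p𝔇 p₀ dyn t a o act o' =
      obsPredGBA p₀ model U θ₀ t a o act o' :=
  observation_probability_equality_general p𝔇 p₀ dyn model U θ₀ hprior hcrit t a act o o'
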